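/- arXiv:1608.06176 — 4 statements merged into one kernel-verified Lean document; each statement's English description precedes it below -/
import Mathlib

section
/- Let $R$ be a commutative ring and $p \in R$. Let $f \geq 1$ and, for each $i \in \mathbb{Z}/f\mathbb{Z}$, let $M_i$ be an $R$-module, $\sigma_i : R \to R$ a ring homomorphism with $\sigma_i(p) = p$, and $V_i : M_i \to M_{i-1}$ an additive map which is $\sigma_i$-semilinear, i.e. $V_i(c \cdot m) = \sigma_i(c) \cdot V_i(m)$ for all $c \in R$, $m \in M_i$. For each $i$ let $q_i \in \mathbb{N}$ and assume there exist elements $g^i_1, \dots, g^i_{q_i} \in M_i$ such that the $R$-submodule of $M_i$ generated by the image of $V_{i+1}$ is contained in $\mathrm{span}_R(g^i_1, \dots, g^i_{q_i}) + p \cdot M_i$. Set $n := q_0$ and $k := \sum_{i \in \mathbb{Z}/f\mathbb{Z}} (q_0 - q_i)^+$ (truncated subtraction). Let $\Phi : M_0 \to M_0$ be the $f$-fold composite $M_0 = M_f \xrightarrow{V_f} M_{f-1} \to \cdots \to M_1 \xrightarrow{V_1} M_0$. Then for every tuple $v : \mathrm{Fin}\, n \to M_0$, the wedge $\Phi(v_1)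 \wedge \cdots \wedge \Phi(v_n)$ lies in the submodule $p^k \cdot \bigwedge^n M_0$ of the $n$-th exterior power $\bigwedge^n M_0$. -/
open Pointwise

/-- The canonical wedge of a tuple, landing in the `n`-th exterior power
(viewed as a submodule of the exterior algebra). -/
noncomputable def wedge (R : Type*) {M : Type*} [CommRing R] [AddCommGroup M] [Module R M]
    (n : ℕ) (v : Fin n → M) : ⋀[R]^n M :=
  ⟨ExteriorAlgebra.ιMulti R n v, ExteriorAlgebra.ιMulti_range R n ⟨v, rfl⟩⟩

/-- The composite `M (j : ZMod f) → M (j-1) → ⋯ → M 0` of a cyclic chain of maps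
`V i : M i → M (i - 1)`. -/
def chainComp {f : ℕ} {M : ZMod f → Type*} (V : ∀ i : ZMod f, M i → M (i - 1)) :
    (j : ℕ) → M ((j : ℕ) : ZMod f) → M 0
  | 0 => fun m => cast (congrArg M (by norm_num)) m
  | j + 1 => fun m =>
      chainComp V j (cast (congrArg M (by push_cast; ring)) (V (((j + 1 : ℕ) : ZMod f)) m))

/-- The `f`-fold composite `Φ : M 0 = M f → M (f-1) → ⋯ → M 0`. -/
def chainPhi {f : ℕ} {M : ZMod f → Type*} (V : ∀ i : ZMod f, M i → M (i - 1)) :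
    M 0 → M 0 :=
  fun m => chainComp V f (cast (congrArg M (ZMod.natCast_self f).symm) m)

/-!
Write `Φⱼ = V₁ ∘ ⋯ ∘ Vⱼ : Mⱼ → M₀` and `Lⱼ` for the span of its image. Semilinearity and
`σᵢ p = p` give `Lⱼ₊₁ ≤ span (Φⱼ ∘ gʲ) ⊔ p • Lⱼ`. Expanding a wedge of `n` vectors of `Lⱼ₊₁`
multilinearly, a term with more than `qⱼ` factors from the `qⱼ` vectors `Φⱼ (gʲₜ)` repeats one of
them and vanishes; every other term carries at least `n - qⱼ` factors `p` and is otherwise a wedge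
of vectors of `Lⱼ`. By induction on `j` a wedge of vectors of `Lⱼ` is divisible by
`p ^ ∑_{i<j} (n - qᵢ)`, and `Φ = Φ_f`.
-/

open Function Submodule Finset

theorem Submodule.pow_smul_mem_pow_smul {R N : Type*} [CommSemiring R] [AddCommMonoid N]
    [Module R N] {S : Submodule R N} {x : N} (hx : x ∈ S) (p : R) {a b : ℕ} (hab : a ≤ b) :
    p ^ b • x ∈ p ^ a • S := by
  rw [← Nat.add_sub_cancel' hab, pow_add, mul_smul]
  exact smul_mem_pointwise_smul _ _ _ (S.smul_mem _ hx)

namespace AlternatingMap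

variable {R M N ι : Type*} [CommSemiring R] [AddCommMonoid M] [Module R M] [AddCommMonoid N]
  [Module R N] [Fintype ι]

theorem map_mem_pow_smul_of_forall_mem_span_sup_smul (F : M [⋀^ι]→ₗ[R] N) (p : R) {q : ℕ}
    (h : Fin q → M) {L : Submodule R M} (hhL : ∀ t, h t ∈ L) {S : Submodule R N}
    (hS : ∀ u : ι → M, (∀ i, u i ∈ L) → F u ∈ S) {v : ι → M}
    (hv : ∀ i, v i ∈ span R (Set.range h) ⊔ p • L) :
    F v ∈ p ^ (Fintype.card ι - q) • S := by
  classical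
  have hdecomp : ∀ i, ∃ (b : Fin q → R) (z : M), z ∈ L ∧ ∑ t, b t • h t + p • z = v i := by
    intro i
    obtain ⟨x, hx, y, hy, hxy⟩ := mem_sup.1 (hv i)
    obtain ⟨b, rfl⟩ := (mem_span_range_iff_exists_fun R).1 hx
    obtain ⟨z, hz, rfl⟩ := (mem_smul_pointwise_iff_exists _ _ _).1 hy
    exact ⟨b, z, hz, hxy⟩
  choose b z hz hbz using hdecomp
  -- `none` indexes the summand `p • z i`, `some t` the summand `b i t • h t`
  let c : ι → Option (Fin q) → R := fun i o => o.elim p (b i)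
  let u : ι → Option (Fin q) → M := fun i o => o.elim (z i) h
  have hv_sum : v = fun i => ∑ o, c i o • u i o := by
    funext i
    simp [Fintype.sum_option, c, u, ← hbz i, add_comm]
  rw [hv_sum, ← F.coe_multilinearMap, MultilinearMap.map_sum]
  refine sum_mem fun r _ => ?_
  rw [MultilinearMap.map_smul_univ, F.coe_multilinearMap]
  set T := univ.filter fun i => ¬r i = none with hT_def
  by_cases hinj : Set.InjOn r T
  · have hT : #T ≤ q := by
      simpa using card_le_card_of_injOn (t := univ.map Embedding.some) r
        (fun i hi => by simpa [Option.ne_none_iff_exists', eq_comm, T] using hi) hinj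
    have hprod :
        ∏ i, c i (r i) = p ^ #(univ.filter fun i => r i = none) * ∏ i ∈ T, c i (r i) := by
      rw [← prod_filter_mul_prod_filter_not univ (fun i => r i = none)]
      congr 1
      rw [prod_congr rfl fun i hi => by rw [(mem_filter.1 hi).2]]
      simp [c]
    rw [hprod, mul_smul]
    refine pow_smul_mem_pow_smul (S.smul_mem _ (hS _ fun i => ?_)) p ?_
    · rcases r i with _ | t
      exacts [hz i, hhL t]
    · have := card_filter_add_card_filter_not (s := univ) fun i => r i = none
      rw [card_univ, ← hT_def] at this
      omega
  · obtain ⟨i, hi, j, hj, hrij, hij⟩ : ∃ i ∈ T, ∃ j ∈ T, r i = r j ∧ i ≠ j := by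
      simpa [Set.InjOn] using hinj
    obtain ⟨t, ht⟩ := Option.ne_none_iff_exists'.1 (mem_filter.1 hi).2
    rw [F.map_eq_zero_of_eq _ (i := i) (j := j) (by simp [u, ← hrij, ht]) hij, smul_zero]
    exact zero_mem _

end AlternatingMap

theorem LinearMap.span_range_comp_le_span_sup_smul {R R₂ N P X Y : Type*} [CommSemiring R]
    [CommSemiring R₂] [AddCommMonoid N] [Module R N] [AddCommMonoid P] [Module R₂ P]
    {τ : R →+* R₂}
    (ψ : N →ₛₗ[τ] P) {p : R} {W : X → N} {g : Y → N}
    (hW : span R (Set.range W) ≤ span R (Set.range g) ⊔ p • ⊤) :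
    span R₂ (Set.range (ψ ∘ W)) ≤ span R₂ (Set.range (ψ ∘ g)) ⊔ τ p • span R₂ (Set.range ψ) := by
  refine span_le.2 (Set.range_subset_iff.2 fun x => ?_)
  obtain ⟨y, hy, _, hw, hyw⟩ := mem_sup.1 (hW (subset_span ⟨x, rfl⟩))
  obtain ⟨w, -, rfl⟩ := (mem_smul_pointwise_iff_exists _ _ _).1 hw
  refine mem_sup.2 ⟨ψ y, ?_, τ p • ψ w, smul_mem_pointwise_smul _ _ _ (subset_span ⟨w, rfl⟩), ?_⟩
  · rw [Set.range_comp]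
    exact image_span_subset_span ψ _ ⟨y, hy, rfl⟩
  · simp [← hyw]

theorem ZMod.sum_range_natCast {f : ℕ} [NeZero f] {A : Type*} [AddCommMonoid A]
    (g : ZMod f → A) : ∑ i ∈ range f, g i = ∑ i, g i :=
  sum_nbij' Nat.cast ZMod.val (fun _ _ => mem_univ _) (fun a _ => mem_range.2 a.val_lt)
    (fun _ ha => ZMod.val_cast_of_lt (mem_range.1 ha)) (fun a _ => ZMod.natCast_zmod_val a)
    fun _ _ => rfl

section Chain

variable {f : ℕ} {R : Type*} [CommRing R] {M : ZMod f → Type*} [∀ i, AddCommGroup (M i)]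
  [∀ i, Module R (M i)] {σ : ZMod f → R →+* R}

def chainTwist (σ : ZMod f → R →+* R) : ℕ → R →+* R
  | 0 => RingHom.id R
  | j + 1 => (chainTwist σ j).comp (σ (j + 1 : ℕ))

theorem chainTwist_apply_eq_self {p : R} (hσ : ∀ i, σ i p = p) (j : ℕ) :
    chainTwist σ j p = p := by
  induction j with
  | zero => rfl
  | succ j ih => simp [chainTwist, hσ, ih]

variable (V : ∀ i, M i →ₛₗ[σ i] M (i - 1))

def chainStep (j : ℕ) : M ((j + 1 : ℕ) : ZMod f) →ₛₗ[σ (j + 1 : ℕ)] M (j : ZMod f) :=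
  (LinearEquiv.cast (by push_cast; ring)).toLinearMap.comp (V _)

theorem chainComp_zero_apply (x : M ((0 : ℕ) : ZMod f)) :
    chainComp (fun i => V i) 0 x = LinearEquiv.cast (R := R) (by simp) x :=
  rfl

theorem chainComp_succ_apply (j : ℕ) (x : M ((j + 1 : ℕ) : ZMod f)) :
    chainComp (fun i => V i) (j + 1) x = chainComp (fun i => V i) j (chainStep V j x) :=
  rfl

theorem chainComp_add (j : ℕ) (x y : M (j : ZMod f)) :
    chainComp (fun i => V i) j (x + y) =
      chainComp (fun i => V i) j x + chainComp (fun i => V i) j y := by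
  induction j with
  | zero => simp only [chainComp_zero_apply, map_add]
  | succ j ih => simp only [chainComp_succ_apply, map_add, ih]

theorem chainComp_smul (j : ℕ) (c : R) (x : M (j : ZMod f)) :
    chainComp (fun i => V i) j (c • x) = chainTwist σ j c • chainComp (fun i => V i) j x := by
  induction j generalizing c with
  | zero => simp only [chainComp_zero_apply, map_smul]; rfl
  | succ j ih => simp only [chainComp_succ_apply, map_smulₛₗ, ih]; rfl

def chainCompₛₗ (j : ℕ) : M (j : ZMod f) →ₛₗ[chainTwist σ j] M 0 where
  toFun := chainComp (fun i => V i) j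
  map_add' := chainComp_add V j
  map_smul' := chainComp_smul V j

theorem ιMulti_mem_pow_smul_of_mem_span_range_chainCompₛₗ {p : R} (hσ : ∀ i, σ i p = p)
    {q : ZMod f → ℕ} (hq : ∀ i, ∃ g : Fin (q (i - 1)) → M (i - 1),
      span R (Set.range (V i)) ≤ span R (Set.range g) ⊔ p • ⊤)
    (n j : ℕ) {u : Fin n → M 0} (hu : ∀ l, u l ∈ span R (Set.range (chainCompₛₗ V j))) :
    exteriorPower.ιMulti R n u ∈
      p ^ (∑ i ∈ range j, (n - q i)) • (⊤ : Submodule R (⋀[R]^n (M 0))) := by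
  induction j generalizing u with
  | zero => simp
  | succ j ih =>
    obtain ⟨g, hg⟩ := hq (j + 1 : ℕ)
    have e : ((j + 1 : ℕ) : ZMod f) - 1 = j := by push_cast; ring
    -- `ψ ∘ V (j + 1)` is `chainCompₛₗ V (j + 1)` by definition
    set ψ := (chainCompₛₗ V j).comp (LinearEquiv.cast (R := R) e).toLinearMap
    have hψ : Set.range ψ = Set.range (chainCompₛₗ V j) :=
      (LinearEquiv.cast e).surjective.range_comp _
    have hspan := LinearMap.span_range_comp_le_span_sup_smul ψ hg
    rw [chainTwist_apply_eq_self hσ, hψ] at hspan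
    have hmem := (exteriorPower.ιMulti R n).map_mem_pow_smul_of_forall_mem_span_sup_smul p
      (ψ ∘ g) (fun t => subset_span (hψ ▸ ⟨g t, rfl⟩)) (fun _ => ih) (fun l => hspan (hu l))
    rwa [smul_smul, ← pow_add, Fintype.card_fin, e, add_comm, ← sum_range_succ] at hmem

end Chain

/-- divisibility of `⋀^n V^f` by `p ^ k`.  Given a cyclic chain of
semilinear maps `V i : M i → M (i-1)` over `R`, such that the image of each `V i`
is contained in a `q (i-1)`-generated submodule of `M (i-1)` plus `p • M (i-1)`,
with `n = q 0` and `k = ∑ i, (q 0 - q i)⁺`, every wedge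
`Φ v₁ ∧ ⋯ ∧ Φ vₙ` of values of the `f`-fold composite `Φ` lies in
`p ^ k • ⋀^n (M 0)`. -/
theorem wedge_chainPhi_mem_pow_smul (f : ℕ) [NeZero f] {R : Type*} [CommRing R] (p : R)
    (M : ZMod f → Type*) [∀ i, AddCommGroup (M i)] [∀ i, Module R (M i)]
    (σ : ZMod f → R →+* R) (hσ : ∀ i, σ i p = p)
    (V : ∀ i : ZMod f, M i → M (i - 1))
    (hVadd : ∀ (i : ZMod f) (x y : M i), V i (x + y) = V i x + V i y)
    (hVsmul : ∀ (i : ZMod f) (c : R) (m : M i), V i (c • m) = σ i c • V i m)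
    (q : ZMod f → ℕ)
    (hq : ∀ i : ZMod f, ∃ g : Fin (q (i - 1)) → M (i - 1),
      Submodule.span R (Set.range (V i)) ≤
        Submodule.span R (Set.range g) ⊔ p • (⊤ : Submodule R (M (i - 1))))
    (n k : ℕ) (hn : n = q 0) (hk : k = ∑ i : ZMod f, (q 0 - q i))
    (v : Fin n → M 0) :
    wedge R n (fun j => chainPhi V (v j)) ∈
      p ^ k • (⊤ : Submodule R ↥(⋀[R]^n (M 0))) := by
  let V' : ∀ i, M i →ₛₗ[σ i] M (i - 1) := fun i => ⟨⟨V i, hVadd i⟩, hVsmul i⟩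
  rw [hk, ← hn, ← ZMod.sum_range_natCast]
  -- `chainPhi V` is `chainCompₛₗ V' f` precomposed with the cast `M 0 = M f`
  exact ιMulti_mem_pow_smul_of_mem_span_range_chainCompₛₗ V' hσ hq n f
    fun l => subset_span ⟨_, rfl⟩
end

section
/- Let $R$ be a commutative ring, $p \in R$, $M$ an $R$-module and $N \subseteq M$ a submodule. Let $q \in \mathbb{N}$ and assume there exist elements $g_1, \dots, g_q \in M$ such that $N \subseteq \mathrm{span}_R(g_1, \dots, g_q) + p \cdot M$. Then for every $n \in \mathbb{N}$ and every tuple $v : \mathrm{Fin}\, n \to M$ with $v_j \in N$ for all $j$, the wedge $v_1 \wedge \cdots \wedge v_n$ lies in the submodule $p^{\,n-q} \cdot \bigwedge^n M$ of $\bigwedge^n M$ (with $n - q$ truncated subtraction, so the statement is vacuous for $n \leq q$). -/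
open Pointwise

/-!
Write each `v j` as `p • m j + ∑ k, c j k • g k` and expand `v 0 ∧ ⋯ ∧ v (n-1)` multilinearly
along these `q + 1` summands. A term that picks the same generator `g k` twice vanishes, and a
term that picks pairwise distinct generators picks them in at most `q` slots, so its coefficient
carries at least `n - q` factors of `p`.
-/

open Finset

namespace Submodule

variable {R M : Type*} [CommSemiring R] [AddCommMonoid M] [Module R M]

theorem smul_mem_smul_top_of_dvd {a b : R} (h : a ∣ b) (x : M) :
    b • x ∈ a • (⊤ : Submodule R M) := by
  obtain ⟨c, rfl⟩ := h
  rw [mul_smul]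
  exact smul_mem_pointwise_smul _ _ _ trivial

theorem mem_span_range_sup_smul_top_iff {κ : Type*} [Fintype κ] {g : κ → M} {p : R} {x : M} :
    x ∈ span R (Set.range g) ⊔ p • (⊤ : Submodule R M) ↔
      ∃ (m : M) (c : κ → R), p • m + ∑ k, c k • g k = x := by
  simp only [mem_sup, mem_span_range_iff_exists_fun, mem_smul_pointwise_iff_exists, mem_top,
    true_and]
  constructor
  · rintro ⟨_, ⟨c, rfl⟩, _, ⟨m, rfl⟩, rfl⟩
    exact ⟨m, c, add_comm _ _⟩
  · rintro ⟨m, c, rfl⟩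
    exact ⟨_, ⟨c, rfl⟩, _, ⟨m, rfl⟩, add_comm _ _⟩

end Submodule

theorem pow_dvd_prod_elim_of_injOn {ι κ R : Type*} [Fintype ι] [Fintype κ] [CommMonoid R]
    (p : R) (c : ι → κ → R) {r : ι → Option κ} (hr : Set.InjOn r {i | r i ≠ none}) :
    p ^ (Fintype.card ι - Fintype.card κ) ∣ ∏ i, (r i).elim p (c i) := by
  classical
  have hcard : #{i | r i ≠ none} ≤ Fintype.card κ := by
    calc #{i | r i ≠ none} ≤ #(univ.erase (none : Option κ)) :=
          card_le_card_of_injOn r (fun i hi => by simpa using hi) (by simpa using hr)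
      _ = Fintype.card κ := by simp
  have hnone : ∏ i with r i = none, (r i).elim p (c i) = p ^ #{i | r i = none} :=
    prod_eq_pow_card fun i hi => by simp [(mem_filter.mp hi).2]
  rw [← prod_filter_mul_prod_filter_not univ (r · = none), hnone]
  refine dvd_mul_of_dvd_left (pow_dvd_pow p ?_) _
  have hsplit : #{i | r i = none} + #{i | r i ≠ none} = Fintype.card ι :=
    card_filter_add_card_filter_not _
  omega

namespace AlternatingMap

variable {ι κ R M N : Type*} [Fintype ι] [Fintype κ] [CommSemiring R]
  [AddCommMonoid M] [Module R M] [AddCommMonoid N] [Module R N]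

theorem map_elim_smul_elim_mem_pow_smul_top (f : M [⋀^ι]→ₗ[R] N) (p : R) (m : ι → M)
    (c : ι → κ → R) (g : κ → M) (r : ι → Option κ) :
    f (fun i => (r i).elim p (c i) • (r i).elim (m i) g) ∈
      p ^ (Fintype.card ι - Fintype.card κ) • (⊤ : Submodule R N) := by
  rw [f.map_smul_univ]
  by_cases hr : Set.InjOn r {i | r i ≠ none}
  · exact Submodule.smul_mem_smul_top_of_dvd (pow_dvd_prod_elim_of_injOn p c hr) _
  · simp only [Set.InjOn, Set.mem_ofPred_eq, not_forall] at hr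
    obtain ⟨i, hi, j, -, hij, hne⟩ := hr
    obtain ⟨k, hk⟩ := Option.ne_none_iff_exists'.mp hi
    have hrepeat : (r i).elim (m i) g = (r j).elim (m j) g := by rw [← hij, hk]; rfl
    rw [f.map_eq_zero_of_eq _ hrepeat hne, smul_zero]
    exact Submodule.zero_mem _

theorem map_mem_pow_smul_top_of_mem_span_sup (f : M [⋀^ι]→ₗ[R] N) (p : R) (g : κ → M)
    (v : ι → M) (hv : ∀ i, v i ∈ Submodule.span R (Set.range g) ⊔ p • (⊤ : Submodule R M)) :
    f v ∈ p ^ (Fintype.card ι - Fintype.card κ) • (⊤ : Submodule R N) := by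
  classical
  choose m c hmc using fun i => Submodule.mem_span_range_sup_smul_top_iff.mp (hv i)
  -- `none` selects the summand `p • m i`, and `some k` the summand `c i k • g k`.
  have hv_sum : v = fun i => ∑ o : Option κ, o.elim p (c i) • o.elim (m i) g := by
    ext i
    simp [Fintype.sum_option, hmc]
  rw [hv_sum, ← f.coe_multilinearMap, MultilinearMap.map_sum]
  exact Submodule.sum_mem _ fun r _ => f.map_elim_smul_elim_mem_pow_smul_top p m c g r

end AlternatingMap

/-- if a submodule `N` of `M` is contained in a `q`-generated submodule
plus `p • M`, then any wedge of `n` elements of `N` is divisible by `p ^ (n - q)` in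
the `n`-th exterior power of `M`. -/
theorem wedge_mem_pow_smul_of_le_span_sup {R M : Type*} [CommRing R] [AddCommGroup M]
    [Module R M] (p : R) (N : Submodule R M) (q : ℕ)
    (hN : ∃ g : Fin q → M,
      N ≤ Submodule.span R (Set.range g) ⊔ p • (⊤ : Submodule R M))
    (n : ℕ) (v : Fin n → M) (hv : ∀ j, v j ∈ N) :
    wedge R n v ∈ p ^ (n - q) • (⊤ : Submodule R ↥(⋀[R]^n M)) := by
  obtain ⟨g, hg⟩ := hN
  have hwedge := (exteriorPower.ιMulti R n).map_mem_pow_smul_top_of_mem_span_sup p g v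
    fun j => hg (hv j)
  rwa [Fintype.card_fin, Fintype.card_fin] at hwedge
end

section
/- Let $R$ be a commutative ring, $m, n, l, k \in \mathbb{N}$, $A$ an $m \times n$ matrix over $R$ and $B$ an $n \times l$ matrix over $R$. For a matrix $X$ with rows indexed by a type $\alpha$ and columns indexed by a type $\beta$, let $I_k(X)$ denote the ideal of $R$ generated by the determinants of all $k \times k$ submatrices $X.\mathrm{submatrix}\, f\, g$, where $f : \mathrm{Fin}\, k \to \alpha$ and $g : \mathrm{Fin}\, k \to \beta$ range over all functions. Then $I_k(A \cdot B) \subseteq I_k(A) \cdot I_k(B)$. -/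
/-!
Restricting to rows `f` of `A` and columns `g` of `B`, a `k × k` minor of `A * B` is the
determinant of a product `C * D` of a `k × n` and an `n × k` matrix. The Cauchy–Binet formula
writes it as a sum, over the `k`-subsets `e` of the middle index, of the products of the minors
`det (C.submatrix id e)` of `A` and `det (D.submatrix e id)` of `B`. It follows from multilinearity
of the determinant in the rows of `C * D`: tuples `p` of middle indices that are not injective
contribute nothing, and an injective one is uniquely a strictly monotone `e` composed with a
permutation, whose sign reassembles the minor of `C`.
-/

open Finset Equiv Function Matrix

/-- The ideal generated by the determinants of all `k × k` submatrices of `X`. -/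
def minorsIdeal {R : Type*} [CommRing R] {α β : Type*} (k : ℕ) (X : Matrix α β R) :
    Ideal R :=
  Ideal.span {d : R | ∃ (f : Fin k → α) (g : Fin k → β), d = (X.submatrix f g).det}

namespace Tuple

theorem sort_strictMono_comp {α : Type*} [LinearOrder α] {k : ℕ} {e : Fin k → α}
    (he : StrictMono e) (σ : Perm (Fin k)) : sort (e ∘ σ) = σ⁻¹ := by
  refine (eq_sort_iff.2 ⟨?_, fun i j hij h => ?_⟩).symm
  · simpa [comp_def] using he.monotone
  · simp only [Perm.coe_inv, Function.comp_apply, apply_symm_apply] at h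
    exact absurd (he.injective h) hij.ne

theorem sum_injective_eq_sum_strictMono_sum_perm {α M : Type*} [LinearOrder α] [Fintype α]
    [AddCommMonoid M] {k : ℕ} (F : (Fin k → α) → M) :
    ∑ p : Fin k → α with Injective p, F p =
      ∑ e : Fin k → α with StrictMono e, ∑ σ : Perm (Fin k), F (e ∘ σ) := by
  rw [← sum_product']
  refine sum_nbij' (fun p => (p ∘ sort p, (sort p)⁻¹)) (fun q => q.1 ∘ q.2) ?_ ?_ ?_ ?_ ?_
  · intro p hp
    simp only [mem_filter_univ, mem_product, mem_univ, and_true] at hp ⊢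
    exact (monotone_sort p).strictMono_of_injective (hp.comp (sort p).injective)
  · rintro ⟨e, σ⟩ he
    simp only [mem_filter_univ, mem_product, mem_univ, and_true] at he ⊢
    exact he.injective.comp σ.injective
  · intro p _
    ext
    simp
  · rintro ⟨e, σ⟩ he
    simp only [mem_filter_univ, mem_product, mem_univ, and_true] at he
    ext <;> simp [sort_strictMono_comp he]
  · intro p _
    congr 1
    ext
    simp

end Tuple

namespace Matrix

variable {R m ι : Type*} [CommRing R] [Fintype m] [DecidableEq m]

theorem det_mul_eq_sum_prod_mul_det_submatrix [Fintype ι] (C : Matrix m ι R)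
    (D : Matrix ι m R) :
    (C * D).det = ∑ p : m → ι, (∏ i, C i (p i)) * (D.submatrix p id).det := by
  have hrows : (C * D) = of fun i => ∑ x, C i x • D x := by
    ext i j
    simp [mul_apply]
  calc (C * D).det = detRowAlternating.toMultilinearMap (fun i => ∑ x, C i x • D x) := by
        rw [hrows]; rfl
    _ = ∑ p : m → ι, detRowAlternating.toMultilinearMap (fun i => C i (p i) • D (p i)) :=
        MultilinearMap.map_sum _ _
    _ = _ := by simp_rw [MultilinearMap.map_smul_univ]; rfl

theorem sum_perm_prod_mul_det_submatrix_comp (C : Matrix m ι R) (D : Matrix ι m R) (e : m → ι) :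
    ∑ σ : Perm m, (∏ i, C i (e (σ i))) * (D.submatrix (e ∘ σ) id).det =
      (C.submatrix id e).det * (D.submatrix e id).det := by
  rw [← det_transpose (C.submatrix id e), det_apply', sum_mul]
  refine sum_congr rfl fun σ _ => ?_
  rw [show D.submatrix (e ∘ σ) id = (D.submatrix e id).submatrix σ id from rfl, det_permute]
  simp only [transpose_apply, submatrix_apply, id_eq]
  ring

theorem det_mul_eq_sum_strictMono [Fintype ι] [LinearOrder ι] {k : ℕ} (C : Matrix (Fin k) ι R)
    (D : Matrix ι (Fin k) R) :
    (C * D).det =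
      ∑ e : Fin k → ι with StrictMono e, (C.submatrix id e).det * (D.submatrix e id).det := by
  calc (C * D).det = ∑ p : Fin k → ι, (∏ i, C i (p i)) * (D.submatrix p id).det :=
        det_mul_eq_sum_prod_mul_det_submatrix C D
    _ = ∑ p : Fin k → ι with Injective p, (∏ i, C i (p i)) * (D.submatrix p id).det := by
        refine (sum_filter_of_ne fun p _ hp => ?_).symm
        by_contra hinj
        refine hp (mul_eq_zero_of_right _ ?_)
        exact detRowAlternating.map_eq_zero_of_not_injective _
          fun h => hinj (h.of_comp (f := D))
    _ = ∑ e : Fin k → ι with StrictMono e, ∑ σ : Perm (Fin k),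
          (∏ i, C i (e (σ i))) * (D.submatrix (e ∘ σ) id).det :=
        Tuple.sum_injective_eq_sum_strictMono_sum_perm _
    _ = _ := sum_congr rfl fun e _ => sum_perm_prod_mul_det_submatrix_comp C D e

end Matrix

theorem det_submatrix_mem_minorsIdeal {R α β : Type*} [CommRing R] {k : ℕ} (X : Matrix α β R)
    (f : Fin k → α) (g : Fin k → β) : (X.submatrix f g).det ∈ minorsIdeal k X :=
  Ideal.subset_span ⟨f, g, rfl⟩

/-- the ideal of `k × k` minors of a product of matrices is contained in
the product of the ideals of `k × k` minors of the factors. -/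
theorem minorsIdeal_mul_le {R : Type*} [CommRing R] (m n l k : ℕ)
    (A : Matrix (Fin m) (Fin n) R) (B : Matrix (Fin n) (Fin l) R) :
    minorsIdeal k (A * B) ≤ minorsIdeal k A * minorsIdeal k B := by
  rw [minorsIdeal, Ideal.span_le]
  rintro _ ⟨f, g, rfl⟩
  rw [submatrix_mul A B f id g bijective_id, det_mul_eq_sum_strictMono]
  exact Ideal.sum_mem _ fun e _ => Ideal.mul_mem_mul
    (det_submatrix_mem_minorsIdeal A f e) (det_submatrix_mem_minorsIdeal B e g)
end

section
/- Let $p$ be a prime number and $R$ a commutative ring which is complete and separated for the $p$-adic topology (i.e. $R$ is adically complete with respect to the ideal generated by $p$). Let $\rho : R \to R$ be a ring homomorphism. Let $r, s \in \mathbb{N}$, fix two distinct indices $a \neq b$ in $\mathrm{Fin}\, r$, and let $C_1$ be an $r \times s$ matrix, $C_2$ an invertible $s \times s$ matrix, $C_3$ an $r \times r$ matrix, $C_4$ an $s \times r$ matrix over $R$. Let $N$ be an $r \times r$ matrix over $R$ all of whose entries lie in $pR$, except the $(a,b)$ entry which is congruent to $1$ modulo $pR$. Then the matrix equation $C_1 +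 X \cdot C_2 + (N + p\, C_3) \cdot X^{\rho} + p\, X \cdot C_4 \cdot X^{\rho} = 0$ has a solution $X$ in the $r \times s$ matrices over $R$, where $X^{\rho}$ denotes the matrix obtained from $X$ by applying $\rho$ to each entry. -/
/-!
Let `E` be the matrix unit at `(a, b)`. Since `a ≠ b` we have `E E^ρ = 0`, so the semilinear map
`X ↦ X C₂ + E X^ρ` has the explicit right inverse `S A = (A - E (A C₂⁻¹)^ρ) C₂⁻¹`. The equation is
then implied by the fixed-point equation `X = S (-(C₁ + Q X))` with
`Q X = (N + p C₃ - E) X^ρ + p X C₄ X^ρ`. As `N + p C₃ - E ≡ 0 mod p`, the map `X ↦ S (-(C₁ + Q X))`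
sends matrices congruent mod `p^k` to matrices congruent mod `p^(k+1)`, so its iterates starting
at `0` converge `p`-adically, entry by entry, to a fixed point.
-/

open Matrix

namespace Ideal

variable {R : Type*} [CommRing R]

def matrices (I : Ideal R) (m n : Type*) : Submodule R (Matrix m n R) where
  carrier := {X | ∀ i j, X i j ∈ I}
  add_mem' hX hY i j := add_mem (hX i j) (hY i j)
  zero_mem' _ _ := zero_mem I
  smul_mem' c _ hX i j := I.mul_mem_left c (hX i j)

variable {I J : Ideal R} {l m n : Type*}

theorem map_pow_le_of_map_le {ρ : R →+* R} (hρ : I.map ρ ≤ I) (k : ℕ) :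
    (I ^ k).map ρ ≤ I ^ k := by
  rw [Ideal.map_pow]
  exact pow_right_mono hρ k

theorem matrices_mono (h : I ≤ J) : I.matrices m n ≤ J.matrices m n :=
  fun _ hX i j => h (hX i j)

@[simp]
theorem top_matrices : (⊤ : Ideal R).matrices m n = ⊤ :=
  eq_top_iff.2 fun _ _ _ _ => Submodule.mem_top

theorem smul_mem_matrices_mul {c : R} (hc : c ∈ I) {X : Matrix m n R}
    (hX : X ∈ J.matrices m n) : c • X ∈ (I * J).matrices m n :=
  fun i j => mul_mem_mul hc (hX i j)

theorem map_mem_matrices {ρ : R →+* R} (hρ : I.map ρ ≤ I) {X : Matrix m n R}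
    (hX : X ∈ I.matrices m n) : X.map ρ ∈ I.matrices m n :=
  fun i j => hρ (mem_map_of_mem ρ (hX i j))

variable [Fintype m]

theorem mul_mem_matrices_mul {X : Matrix l m R} {Y : Matrix m n R} (hX : X ∈ I.matrices l m)
    (hY : Y ∈ J.matrices m n) : X * Y ∈ (I * J).matrices l n :=
  fun i j => _root_.sum_mem fun k _ => mul_mem_mul (hX i k) (hY k j)

theorem mul_mem_matrices_left (X : Matrix l m R) {Y : Matrix m n R} (hY : Y ∈ I.matrices m n) :
    X * Y ∈ I.matrices l n :=
  fun _ j => _root_.sum_mem fun k _ => I.mul_mem_left _ (hY k j)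

theorem mul_mem_matrices_right {X : Matrix l m R} (hX : X ∈ I.matrices l m) (Y : Matrix m n R) :
    X * Y ∈ I.matrices l n :=
  fun i _ => _root_.sum_mem fun k _ => I.mul_mem_right _ (hX i k)

end Ideal

namespace Matrix

open Ideal

variable {R : Type*} [CommRing R] {I : Ideal R} {m n : Type*}

theorem sub_single_mem_matrices [DecidableEq m] {N : Matrix m m R} {a b : m}
    (hN : ∀ i j, ¬(i = a ∧ j = b) → N i j ∈ I) (hNab : N a b - 1 ∈ I) :
    N - single a b 1 ∈ I.matrices m m := by
  intro i j
  by_cases hij : i = a ∧ j = b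
  · obtain ⟨rfl, rfl⟩ := hij
    simpa using hNab
  · rw [sub_apply, single_apply_of_ne a b 1 i j fun h => hij ⟨h.1.symm, h.2.symm⟩, sub_zero]
    exact hN i j hij

theorem exists_fixedPoint_of_pow_contracting [IsAdicComplete I R]
    (f : Matrix m n R → Matrix m n R)
    (hf : ∀ k X Y, X - Y ∈ (I ^ k).matrices m n → f X - f Y ∈ (I ^ (k + 1)).matrices m n) :
    ∃ X, f X = X := by
  set x : ℕ → Matrix m n R := fun k => f^[k] 0 with hx
  have step (k : ℕ) : x (k + 1) - x k ∈ (I ^ k).matrices m n := by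
    induction k with
    | zero => simp
    | succ k ih => simpa only [hx, Function.iterate_succ_apply'] using hf k _ _ ih
  have cauchy {k l : ℕ} (hkl : k ≤ l) : x l - x k ∈ (I ^ k).matrices m n := by
    induction l, hkl using Nat.le_induction with
    | base => simp
    | succ l hkl ih =>
      simpa using add_mem (matrices_mono (Ideal.pow_le_pow_right hkl) (step l)) ih
  have smodEq_iff {k : ℕ} {y z : R} :
      y ≡ z [SMOD (I ^ k • ⊤ : Submodule R R)] ↔ y - z ∈ I ^ k := by
    rw [SModEq.sub_mem, smul_eq_mul, Ideal.mul_top]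
  have entry_limit (i j) : ∃ L : R, ∀ k, x k i j - L ∈ I ^ k := by
    obtain ⟨L, hL⟩ := IsPrecomplete.prec inferInstance (f := fun k => x k i j)
      fun hkl => smodEq_iff.2 <| by simpa using neg_mem (cauchy hkl i j)
    exact ⟨L, fun k => smodEq_iff.1 (hL k)⟩
  choose L hL using entry_limit
  have limit (k : ℕ) : of L - x k ∈ (I ^ k).matrices m n := fun i j => by
    simpa using neg_mem (hL i j k)
  refine ⟨of L, ext fun i j =>
    sub_eq_zero.1 <| IsHausdorff.haus (I := I) inferInstance _ fun k => ?_⟩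
  rw [smodEq_iff, sub_zero]
  have split : f (of L) - of L = (f (of L) - f (x k)) - (of L - x (k + 1)) := by
    simp only [hx, Function.iterate_succ_apply']; abel
  rw [← sub_apply, split]
  exact sub_mem (matrices_mono (Ideal.pow_le_pow_right k.le_succ) (hf k _ _ (limit k)) i j)
    (matrices_mono (Ideal.pow_le_pow_right k.le_succ) (limit (k + 1)) i j)

variable [Fintype m] [Fintype n] (ρ : R →+* R)

def twistedSolve (E : Matrix m m R) (B : Matrix n n R) (A : Matrix m n R) : Matrix m n R :=
  (A - E * (A * B).map ρ) * B

variable {ρ} {E : Matrix m m R} {B : Matrix n n R}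

theorem twistedSolve_mul_add_mul_map [DecidableEq n] {C : Matrix n n R} (hBC : B * C = 1)
    (hE : E * E.map ρ = 0) (A : Matrix m n R) :
    twistedSolve ρ E B A * C + E * (twistedSolve ρ E B A).map ρ = A := by
  have solve_mul : twistedSolve ρ E B A * C = A - E * (A * B).map ρ := by
    rw [twistedSolve, Matrix.mul_assoc, hBC, Matrix.mul_one]
  have mul_map_solve : E * (twistedSolve ρ E B A).map ρ = E * (A * B).map ρ := by
    rw [twistedSolve, Matrix.sub_mul, Matrix.map_sub _ (map_sub ρ), Matrix.mul_sub,
      Matrix.mul_assoc E, Matrix.map_mul (L := E), ← Matrix.mul_assoc E, hE, Matrix.zero_mul,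
      sub_zero]
  rw [solve_mul, mul_map_solve, sub_add_cancel]

theorem twistedSolve_sub (A A' : Matrix m n R) :
    twistedSolve ρ E B A - twistedSolve ρ E B A' = twistedSolve ρ E B (A - A') := by
  simp only [twistedSolve, Matrix.sub_mul, Matrix.map_sub _ (map_sub ρ), Matrix.mul_sub]
  abel

theorem twistedSolve_mem_matrices (hρ : I.map ρ ≤ I) {A : Matrix m n R}
    (hA : A ∈ I.matrices m n) : twistedSolve ρ E B A ∈ I.matrices m n :=
  mul_mem_matrices_right (sub_mem hA <| mul_mem_matrices_left E <|
    map_mem_matrices hρ <| mul_mem_matrices_right hA B) B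

theorem mul_map_add_smul_mul_mul_map_sub_mem (hρ : I.map ρ ≤ I) {D : Matrix m m R}
    (hD : D ∈ I.matrices m m) {c : R} (hc : c ∈ I) (F : Matrix n m R) {k : ℕ}
    {X Y : Matrix m n R} (hXY : X - Y ∈ (I ^ k).matrices m n) :
    (D * X.map ρ + c • (X * F * X.map ρ)) - (D * Y.map ρ + c • (Y * F * Y.map ρ)) ∈
      (I ^ (k + 1)).matrices m n := by
  have hρXY : X.map ρ - Y.map ρ ∈ (I ^ k).matrices m n := by
    simpa [Matrix.map_sub _ (map_sub ρ)] using
      map_mem_matrices (Ideal.map_pow_le_of_map_le hρ k) hXY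
  have expand :
      (D * X.map ρ + c • (X * F * X.map ρ)) - (D * Y.map ρ + c • (Y * F * Y.map ρ)) =
        D * (X.map ρ - Y.map ρ) +
          c • ((X - Y) * F * X.map ρ + Y * F * (X.map ρ - Y.map ρ)) := by
    simp only [Matrix.mul_sub, Matrix.sub_mul, smul_add, smul_sub]
    abel
  rw [expand, pow_succ']
  exact add_mem (mul_mem_matrices_mul hD hρXY) <| smul_mem_matrices_mul hc <|
    add_mem (mul_mem_matrices_right (mul_mem_matrices_right hXY F) _)
      (mul_mem_matrices_left _ hρXY)

end Matrix

theorem matrix_equation_solvable_general (p : ℕ) {R : Type*} [CommRing R]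
    [IsAdicComplete (Ideal.span {(p : R)}) R] (ρ : R →+* R)
    (r s : ℕ) (a b : Fin r) (hab : a ≠ b)
    (C₁ : Matrix (Fin r) (Fin s) R) (C₂ : Matrix (Fin s) (Fin s) R) (hC₂ : IsUnit C₂)
    (C₃ : Matrix (Fin r) (Fin r) R) (C₄ : Matrix (Fin s) (Fin r) R)
    (N : Matrix (Fin r) (Fin r) R)
    (hN : ∀ i j, ¬(i = a ∧ j = b) → N i j ∈ Ideal.span {(p : R)})
    (hNab : N a b - 1 ∈ Ideal.span {(p : R)}) :
    ∃ X : Matrix (Fin r) (Fin s) R,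
      C₁ + X * C₂ + (N + (p : R) • C₃) * X.map ρ + (p : R) • (X * C₄ * X.map ρ) = 0 := by
  set I := Ideal.span {(p : R)}
  have hpI : (p : R) ∈ I := Ideal.mem_span_singleton_self _
  have hρI : I.map ρ ≤ I := by simp [I, Ideal.map_span]
  obtain ⟨u, rfl⟩ := hC₂
  set E : Matrix (Fin r) (Fin r) R := single a b 1
  have hE : E * E.map ρ = 0 := by simp [E, map_single, hab.symm]
  set D := N + (p : R) • C₃ - E
  have hD : D ∈ I.matrices (Fin r) (Fin r) := by
    rw [show D = N - E + (p : R) • C₃ from (sub_add_eq_add_sub N E _).symm]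
    exact add_mem (sub_single_mem_matrices hN hNab) fun i j => I.mul_mem_right _ hpI
  set Q := fun X : Matrix (Fin r) (Fin s) R => D * X.map ρ + (p : R) • (X * C₄ * X.map ρ)
  obtain ⟨X, hX⟩ := exists_fixedPoint_of_pow_contracting
    (fun X => twistedSolve ρ E ↑u⁻¹ (-(C₁ + Q X))) fun k X Y hXY => by
      rw [twistedSolve_sub]
      refine twistedSolve_mem_matrices (Ideal.map_pow_le_of_map_le hρI _) ?_
      rw [show -(C₁ + Q X) - -(C₁ + Q Y) = -(Q X - Q Y) by abel]
      exact neg_mem (mul_map_add_smul_mul_mul_map_sub_mem hρI hD hpI C₄ hXY)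
  refine ⟨X, ?_⟩
  have hLX := twistedSolve_mul_add_mul_map u.inv_mul hE (-(C₁ + Q X))
  rw [hX] at hLX
  calc C₁ + X * (u : Matrix (Fin s) (Fin s) R) + (N + (p : R) • C₃) * X.map ρ
        + (p : R) • (X * C₄ * X.map ρ)
      = C₁ + (X * (u : Matrix (Fin s) (Fin s) R) + E * X.map ρ) + Q X := by
        simp only [Q, D, Matrix.sub_mul]; abel
    _ = 0 := by rw [hLX]; abel

/-- solvability of the matrix equation
`C₁ + X C₂ + (N + p C₃) X^ρ + p X C₄ X^ρ = 0` over a `p`-adically complete ring,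
where `N` has all entries divisible by `p` except the `(a, b)` entry, which is
congruent to `1` modulo `p`. -/
theorem matrix_equation_solvable (p : ℕ) (hp : p.Prime) {R : Type*} [CommRing R]
    [IsAdicComplete (Ideal.span {(p : R)}) R] (ρ : R →+* R)
    (r s : ℕ) (a b : Fin r) (hab : a ≠ b)
    (C₁ : Matrix (Fin r) (Fin s) R) (C₂ : Matrix (Fin s) (Fin s) R) (hC₂ : IsUnit C₂)
    (C₃ : Matrix (Fin r) (Fin r) R) (C₄ : Matrix (Fin s) (Fin r) R)
    (N : Matrix (Fin r) (Fin r) R)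
    (hN : ∀ i j, ¬(i = a ∧ j = b) → N i j ∈ Ideal.span {(p : R)})
    (hNab : N a b - 1 ∈ Ideal.span {(p : R)}) :
    ∃ X : Matrix (Fin r) (Fin s) R,
      C₁ + X * C₂ + (N + (p : R) • C₃) * X.map ρ + (p : R) • (X * C₄ * X.map ρ) = 0 :=
  matrix_equation_solvable_general p ρ r s a b hab C₁ C₂ hC₂ C₃ C₄ N hN hNab
end
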